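/- Let $W = \mathbb{C}((t))\partial_t$ be the Witt algebra of vector fields on the punctured formal disc, with basis $L_n = -t^{n+1}\partial_t$, $n \in \mathbb{Z}$, and bracket $[L_m, L_n] = (m-n)L_{m+n}$. Then for every $c \in \mathbb{C}$ the 2-cochain $\omega_c(L_m, L_n) = \frac{c}{12}(m^3 - m)\delta_{m,-n}$ is a Lie algebra 2-cocycle on $W$, and the resulting central extensions $\mathrm{Vir}'_c$ for distinct $c$ are pairwise non-isomorphic as extensions; every 2-cocycle on $W$ is cohomologous to $\omega_c$ for a unique $c$. -/

import Mathlib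

/-!
Evaluating the cocycle identity on `L₀, Lₘ, Lₙ` gives `(m + n) ω(Lₘ, Lₙ) = (m - n) ω(L_{m+n}, L₀)`,
so off the diagonal `m + n = 0` every cocycle agrees with the coboundary of `f(Lₖ) = ω(Lₖ, L₀) / k`.
On the diagonal, `bₘ = ω(Lₘ, L₋ₘ) - m ω(L₁, L₋₁)` is odd in `m` and the cocycle identity on
`Lₖ, L₁, L₋ₖ₋₁` becomes `(k - 1) b_{k+1} = (k + 2) bₖ`, whose odd solutions are the multiples of
`m³ - m`; the remaining term `m ω(L₁, L₋₁)` is the coboundary of `f(L₀) = ω(L₁, L₋₁) / 2`.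
Since every coboundary takes the values `2 f(L₀)` and `4 f(L₀)` at `(L₁, L₋₁)` and `(L₂, L₋₂)`,
the combination `2 (ω(L₂, L₋₂) - 2 ω(L₁, L₋₁))` is a cohomology invariant and equals `c` on `ω_c`.
-/

open LinearMap

section Basis

variable {R ι : Type*} [CommRing R]

theorem LieAlgebra.cyclic_apply_eq_zero_of_basis {W : Type*} [LieRing W] [LieAlgebra R W]
    (b : Module.Basis ι R W) {ω : W →ₗ[R] W →ₗ[R] R}
    (h : ∀ i j k, ω ⁅b i, b j⁆ (b k) + ω ⁅b j, b k⁆ (b i) + ω ⁅b k, b i⁆ (b j) = 0)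
    (x y z : W) : ω ⁅x, y⁆ z + ω ⁅y, z⁆ x + ω ⁅z, x⁆ y = 0 := by
  let T : W →ₗ[R] W →ₗ[R] W →ₗ[R] R :=
    (mk₂ R (fun x y : W => ⁅x, y⁆) add_lie smul_lie lie_add lie_smul).compr₂ ω
  -- `rotate S x y z = S z x y`
  let rotate (S : W →ₗ[R] W →ₗ[R] W →ₗ[R] R) : W →ₗ[R] W →ₗ[R] W →ₗ[R] R :=
    lflip.toLinearMap ∘ₗ S.flip
  have hT : T + rotate (rotate T) + rotate T = 0 :=
    b.ext fun i => ext_basis b b fun j k => h i j k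
  exact congr($hT x y z)

theorem LinearMap.isAlt_of_basis [IsDomain R] [CharZero R] {M : Type*} [AddCommGroup M]
    [Module R M] (b : Module.Basis ι R M) {B : M →ₗ[R] M →ₗ[R] R}
    (h : ∀ i j, B (b i) (b j) = -B (b j) (b i)) : B.IsAlt :=
  isAlt_iff_eq_neg_flip.mpr (ext_basis b b fun i j => h i j)

end Basis

theorem Int.eq_cubic_of_odd_of_recurrence {K : Type*} [Field K] [CharZero K] {b : ℤ → K}
    (hodd : ∀ m, b (-m) = -b m) (hrec : ∀ k : ℤ, ((k : K) - 1) * b (k + 1) = (k + 2) * b k)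
    (m : ℤ) : b m = b 2 / 6 * ((m : K) ^ 3 - m) := by
  have h0 : b 0 = 0 := self_eq_neg.mp (by simpa using hodd 0)
  have h1 : b 1 = 0 := by simpa [h0] using (hrec 0).symm
  have hge2 : ∀ j : ℕ, b (j + 2) = b 2 / 6 * (((j + 2 : ℤ) : K) ^ 3 - ((j + 2 : ℤ) : K)) := by
    intro j
    induction j with
    | zero => push_cast; ring
    | succ j ih =>
      refine mul_left_cancel₀ (Nat.cast_add_one_ne_zero (R := K) j) ?_
      have hj := hrec (j + 2)
      push_cast at hj ih ⊢
      rw [show (j : ℤ) + 1 + 2 = j + 2 + 1 by ring]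
      linear_combination hj + ((j : K) + 4) * ih
  have hnat : ∀ j : ℕ, b j = b 2 / 6 * ((j : K) ^ 3 - j) := by
    rintro (_ | _ | j)
    · simp [h0]
    · simp [h1]
    · exact_mod_cast hge2 j
  obtain ⟨j, rfl | rfl⟩ := Int.eq_nat_or_neg m
  · exact_mod_cast hnat j
  · rw [hodd, hnat]; push_cast; ring

namespace WittAlgebra

variable {K W : Type*} [Field K] [LieRing W] [LieAlgebra K W]

def virasoroCoeff (c : K) (m n : ℤ) : K :=
  if m + n = 0 then c / 12 * ((m : K) ^ 3 - (m : K)) else 0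

theorem virasoroCoeff_antisymm (c : K) (m n : ℤ) :
    virasoroCoeff c m n = -virasoroCoeff c n m := by
  unfold virasoroCoeff
  by_cases h : m + n = 0
  · obtain rfl : n = -m := by omega
    rw [if_pos h, if_pos (by omega)]
    push_cast; ring
  · rw [if_neg h, if_neg (by omega), neg_zero]

theorem virasoroCoeff_cyclic (c : K) (k m n : ℤ) :
    ((k : K) - m) * virasoroCoeff c (k + m) n + ((m : K) - n) * virasoroCoeff c (m + n) k
      + ((n : K) - k) * virasoroCoeff c (n + k) m = 0 := by
  unfold virasoroCoeff
  by_cases h : k + m + n = 0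
  · obtain rfl : n = -k - m := by omega
    rw [if_pos h, if_pos (by ring), if_pos (by ring)]
    push_cast; ring
  · rw [if_neg h, if_neg (by omega), if_neg (by omega)]
    ring

def IsWittBasis (L : Module.Basis ℤ K W) : Prop :=
  ∀ m n : ℤ, ⁅L m, L n⁆ = ((m : K) - n) • L (m + n)

variable (L : Module.Basis ℤ K W)

noncomputable def virasoroCocycle (c : K) : W →ₗ[K] W →ₗ[K] K :=
  L.constr K fun m => L.constr K fun n => virasoroCoeff c m n

@[simp]
theorem virasoroCocycle_apply_basis (c : K) (m n : ℤ) :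
    virasoroCocycle L c (L m) (L n) = virasoroCoeff c m n := by
  simp [virasoroCocycle, Module.Basis.constr_basis]

theorem virasoroCocycle_isAlt [CharZero K] (c : K) : (virasoroCocycle L c).IsAlt :=
  isAlt_of_basis L fun m n => by simpa using virasoroCoeff_antisymm c m n

noncomputable def centralCharge (ω : W →ₗ[K] W →ₗ[K] K) : K :=
  2 * (ω (L 2) (L (-2)) - 2 * ω (L 1) (L (-1)))

variable {L}

theorem cyclic_apply_basis (hL : IsWittBasis L) (ω : W →ₗ[K] W →ₗ[K] K) (k m n : ℤ) :
    ω ⁅L k, L m⁆ (L n) + ω ⁅L m, L n⁆ (L k) + ω ⁅L n, L k⁆ (L m) =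
      ((k : K) - m) * ω (L (k + m)) (L n) + ((m : K) - n) * ω (L (m + n)) (L k)
        + ((n : K) - k) * ω (L (n + k)) (L m) := by
  simp [hL k m, hL m n, hL n k]

theorem virasoroCocycle_cyclic (hL : IsWittBasis L) (c : K) (x y z : W) :
    virasoroCocycle L c ⁅x, y⁆ z + virasoroCocycle L c ⁅y, z⁆ x + virasoroCocycle L c ⁅z, x⁆ y
      = 0 :=
  LieAlgebra.cyclic_apply_eq_zero_of_basis L (fun k m n => by
    rw [cyclic_apply_basis hL]; simpa using virasoroCoeff_cyclic c k m n) x y z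

variable {ω : W →ₗ[K] W →ₗ[K] K}

theorem add_mul_apply_basis (hL : IsWittBasis L) (hω : ω.IsAlt)
    (hcoc : ∀ x y z, ω ⁅x, y⁆ z + ω ⁅y, z⁆ x + ω ⁅z, x⁆ y = 0) (m n : ℤ) :
    ((m : K) + n) * ω (L m) (L n) = ((m : K) - n) * ω (L (m + n)) (L 0) := by
  have h := cyclic_apply_basis hL ω 0 m n
  simp only [hcoc, Int.cast_zero, zero_add, add_zero, zero_sub, sub_zero] at h
  linear_combination h - (n : K) * hω.neg (L n) (L m)

theorem apply_basis_neg [CharZero K] (hL : IsWittBasis L) (hω : ω.IsAlt)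
    (hcoc : ∀ x y z, ω ⁅x, y⁆ z + ω ⁅y, z⁆ x + ω ⁅z, x⁆ y = 0) (m : ℤ) :
    ω (L m) (L (-m)) = centralCharge L ω / 12 * ((m : K) ^ 3 - m) + m * ω (L 1) (L (-1)) := by
  set b : ℤ → K := fun m => ω (L m) (L (-m)) - m * ω (L 1) (L (-1))
  have hodd : ∀ m, b (-m) = -b m := fun m => by
    simp only [b, neg_neg, ← hω.neg (L m), Int.cast_neg]; ring
  have hrec : ∀ k : ℤ, ((k : K) - 1) * b (k + 1) = (k + 2) * b k := fun k => by
    have h := cyclic_apply_basis hL ω k 1 (-k - 1)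
    rw [hcoc, show 1 + (-k - 1) = -k by ring, show -k - 1 + k = -1 by ring] at h
    simp only [b, show -(k + 1) = -k - 1 by ring]
    push_cast at h ⊢
    linear_combination -h + ((k : K) + 2) * hω.neg (L (-k)) (L k)
      - (2 * (k : K) + 1) * hω.neg (L (-1)) (L 1)
  have hb := Int.eq_cubic_of_odd_of_recurrence hodd hrec m
  simp only [b, centralCharge] at hb ⊢
  push_cast at hb
  linear_combination hb

theorem exists_eq_virasoroCoeff_add [CharZero K] (hL : IsWittBasis L) (hω : ω.IsAlt)
    (hcoc : ∀ x y z, ω ⁅x, y⁆ z + ω ⁅y, z⁆ x + ω ⁅z, x⁆ y = 0) :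
    ∃ f : W →ₗ[K] K, ∀ m n : ℤ,
      ω (L m) (L n) = virasoroCoeff (centralCharge L ω) m n + f ⁅L m, L n⁆ := by
  let f : W →ₗ[K] K :=
    L.constr K fun k => if k = 0 then ω (L 1) (L (-1)) / 2 else ω (L k) (L 0) / k
  refine ⟨f, fun m n => ?_⟩
  simp only [hL m n, map_smul, smul_eq_mul, f, Module.Basis.constr_basis, virasoroCoeff]
  by_cases h : m + n = 0
  · obtain rfl : n = -m := by omega
    rw [if_pos h, if_pos h, apply_basis_neg hL hω hcoc]
    push_cast; ring
  · rw [if_neg h, if_neg h, zero_add, mul_div_assoc', eq_div_iff (by exact_mod_cast h)]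
    push_cast
    linear_combination add_mul_apply_basis hL hω hcoc m n

theorem eq_centralCharge_of_eq_virasoroCoeff_add [CharZero K] (hL : IsWittBasis L) {c : K}
    {f : W →ₗ[K] K} (hf : ∀ m n : ℤ, ω (L m) (L n) = virasoroCoeff c m n + f ⁅L m, L n⁆) :
    c = centralCharge L ω := by
  have h1 := hf 1 (-1)
  have h2 := hf 2 (-2)
  simp only [hL 1 (-1), hL 2 (-2), map_smul, smul_eq_mul, virasoroCoeff] at h1 h2
  norm_num at h1 h2
  rw [centralCharge, h1, h2]
  ring

end WittAlgebra

/-- The Virasoro cocycles on the Witt algebra.  Let `W` be the Witt algebra,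
presented as a Lie algebra over `ℂ` with basis `Lₙ`, `n ∈ ℤ`, and bracket
`⁅Lₘ, Lₙ⁆ = (m - n) L_{m+n}`.  Then for every `c ∈ ℂ` the 2-cochain
`ω_c(Lₘ, Lₙ) = (c/12)(m³ - m) δ_{m,-n}` extends to a Lie algebra 2-cocycle on
`W`, and every 2-cocycle on `W` is cohomologous to `ω_c` for a unique `c`
(so `H²(W; ℂ) ≅ ℂ` and the central extensions `Vir'_c` for distinct `c` are
pairwise non-isomorphic as extensions). -/
theorem witt_algebra_H2
    (W : Type*) [LieRing W] [LieAlgebra ℂ W]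
    (L : Module.Basis ℤ ℂ W)
    (hL : ∀ m n : ℤ, ⁅L m, L n⁆ = ((m : ℂ) - (n : ℂ)) • L (m + n)) :
    (∀ c : ℂ, ∃ ω : W →ₗ[ℂ] W →ₗ[ℂ] ℂ,
      (∀ x, ω x x = 0) ∧
      (∀ x y z, ω ⁅x, y⁆ z + ω ⁅y, z⁆ x + ω ⁅z, x⁆ y = 0) ∧
      (∀ m n : ℤ, ω (L m) (L n) =
        if m + n = 0 then c / 12 * ((m : ℂ) ^ 3 - (m : ℂ)) else 0)) ∧
    (∀ ω : W →ₗ[ℂ] W →ₗ[ℂ] ℂ,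
      (∀ x, ω x x = 0) →
      (∀ x y z, ω ⁅x, y⁆ z + ω ⁅y, z⁆ x + ω ⁅z, x⁆ y = 0) →
      ∃! c : ℂ, ∃ f : W →ₗ[ℂ] ℂ, ∀ m n : ℤ,
        ω (L m) (L n) =
          (if m + n = 0 then c / 12 * ((m : ℂ) ^ 3 - (m : ℂ)) else 0)
            + f ⁅L m, L n⁆) := by
  refine ⟨fun c => ⟨WittAlgebra.virasoroCocycle L c, WittAlgebra.virasoroCocycle_isAlt L c,
    WittAlgebra.virasoroCocycle_cyclic hL c, WittAlgebra.virasoroCocycle_apply_basis L c⟩,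
    fun ω hω hcoc => ?_⟩
  obtain ⟨f, hf⟩ := WittAlgebra.exists_eq_virasoroCoeff_add hL hω hcoc
  exact ⟨WittAlgebra.centralCharge L ω, ⟨f, hf⟩,
    fun c ⟨_, hf'⟩ => WittAlgebra.eq_centralCharge_of_eq_virasoroCoeff_add hL hf'⟩
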